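/- arXiv:2104.00003 — 2 statements merged into one kernel-verified Lean document; each statement's English description precedes it below -/
import Mathlib

section
/- (Monotonicity of the dynamical coherence measure.) Let C be a real-valued function on d×d complex matrices that is bounded on the set D of density matrices. If Φ₁ and Φ₂ are quantum channels that are CMIO for C, then for every quantum channel Θ one has 𝔠_C(Φ₁ ∘ Θ ∘ Φ₂) ≤ 𝔠_C(Θ). -/
open Matrix ComplexOrder

/-- A density matrix: positive semidefinite with trace 1. -/
def IsDensity (d : ℕ) (ρ : Matrix (Fin d) (Fin d) ℂ) : Prop :=
  ρ.PosSemidef ∧ ρ.trace = 1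

/-- A quantum channel: a map admitting a Kraus decomposition. -/
def IsChannel (d : ℕ) (Λ : Matrix (Fin d) (Fin d) ℂ → Matrix (Fin d) (Fin d) ℂ) : Prop :=
  ∃ (m : ℕ) (K : Fin m → Matrix (Fin d) (Fin d) ℂ),
    (∀ ρ, Λ ρ = ∑ i, K i * ρ * (K i)ᴴ) ∧ (∑ i, (K i)ᴴ * K i) = 1

/-- A channel is an incoherent operation induced by the coherence measure `C` (CMIO for `C`)
if it does not increase `C` on any density matrix. -/
def IsCMIO (d : ℕ) (C : Matrix (Fin d) (Fin d) ℂ → ℝ)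
    (Λ : Matrix (Fin d) (Fin d) ℂ → Matrix (Fin d) (Fin d) ℂ) : Prop :=
  ∀ ρ, IsDensity d ρ → C (Λ ρ) ≤ C ρ

/-- `C` is bounded on the set of density matrices. -/
def BoundedOnD (d : ℕ) (C : Matrix (Fin d) (Fin d) ℂ → ℝ) : Prop :=
  ∃ M : ℝ, ∀ ρ, IsDensity d ρ → |C ρ| ≤ M

/-- `C` is convex on density matrices. -/
def ConvexOnD (d : ℕ) (C : Matrix (Fin d) (Fin d) ℂ → ℝ) : Prop :=
  ∀ t : ℝ, t ∈ Set.Icc (0 : ℝ) 1 → ∀ ρ σ : Matrix (Fin d) (Fin d) ℂ,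
    IsDensity d ρ → IsDensity d σ →
    C (t • ρ + (1 - t) • σ) ≤ t * C ρ + (1 - t) * C σ

/-- The power of the channel `Θ` over the channel `Λ`:
`P_C(Θ; Λ) = sup_{ρ ∈ D} (C(Θ(ρ)) − C(Λ(ρ)))`. -/
noncomputable def power (d : ℕ) (C : Matrix (Fin d) (Fin d) ℂ → ℝ)
    (Θ Λ : Matrix (Fin d) (Fin d) ℂ → Matrix (Fin d) (Fin d) ℂ) : ℝ :=
  sSup ((fun ρ => C (Θ ρ) - C (Λ ρ)) '' {ρ | IsDensity d ρ})

/-- The dynamical coherence measure `𝔠_C(Θ) = inf_{Λ channel, CMIO for C} |P_C(Θ; Λ)|`. -/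
noncomputable def dynCoh (d : ℕ) (C : Matrix (Fin d) (Fin d) ℂ → ℝ)
    (Θ : Matrix (Fin d) (Fin d) ℂ → Matrix (Fin d) (Fin d) ℂ) : ℝ :=
  sInf ((fun Λ => |power d C Θ Λ|) '' {Λ | IsChannel d Λ ∧ IsCMIO d C Λ})

/-!
Precomposing a CMIO channel `Λ` with `Φ₂` gives a CMIO channel `Λ ∘ Φ₂`, and since `Φ₁` does not
increase `C`, `P_C(Φ₁ ∘ Θ ∘ Φ₂; Λ ∘ Φ₂) ≤ P_C(Θ; Λ)`. The absolute values do no harm because the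
power of any channel `Ψ` over a CMIO channel `Λ` is nonnegative: `Ψ` fixes some density matrix `ρ`
(a cluster point of the Cesàro averages of an orbit, by compactness and convexity of `D`), and
there `C(Ψ ρ) - C(Λ ρ) = C ρ - C(Λ ρ) ≥ 0`.
-/

open Filter Topology Set

section FixedPoint

variable {E : Type*} [AddCommGroup E] [Module ℝ E]

theorem LinearMap.apply_smul_sum_range_iterate_sub (f : E →ₗ[ℝ] E) (x : E) (n : ℕ) (c : ℝ) :
    f (c • ∑ k ∈ Finset.range (n + 1), f^[k] x) - c • ∑ k ∈ Finset.range (n + 1), f^[k] x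
      = c • (f^[n + 1] x - x) := by
  rw [map_smul, map_sum, ← smul_sub, ← Finset.sum_sub_distrib]
  simp only [← Function.iterate_succ_apply' f]
  rw [Finset.sum_range_sub (fun k => f^[k] x), Function.iterate_zero_apply]

theorem Convex.smul_sum_range_mem {K : Set E} (hK : Convex ℝ K) {z : ℕ → E}
    (hz : ∀ k, z k ∈ K) (n : ℕ) : (1 / ((n : ℝ) + 1)) • ∑ k ∈ Finset.range (n + 1), z k ∈ K := by
  rw [Finset.smul_sum]
  refine hK.sum_mem (fun _ _ => by positivity) ?_ fun k _ => hz k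
  rw [Finset.sum_const, Finset.card_range, nsmul_eq_mul]
  push_cast
  field_simp

variable [TopologicalSpace E] [IsTopologicalAddGroup E] [ContinuousSMul ℝ E] [T2Space E]

theorem LinearMap.exists_mem_apply_eq_self_of_mapsTo {K : Set E} (hKc : IsCompact K)
    (hKv : Convex ℝ K) (hne : K.Nonempty) (f : E →ₗ[ℝ] E) (hf : Continuous f)
    (hfK : MapsTo f K K) : ∃ x ∈ K, f x = x := by
  obtain ⟨x₀, hx₀⟩ := hne
  set avg : ℕ → E := fun n => (1 / ((n : ℝ) + 1)) • ∑ k ∈ Finset.range (n + 1), f^[k] x₀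
  have hiter : ∀ k, f^[k] x₀ ∈ K := fun k => hfK.iterate k hx₀
  -- Cesàro averages are almost fixed: the defect telescopes to `(n + 1)⁻¹ • (f^[n+1] x₀ - x₀)`.
  have hdefect : Tendsto (fun n => f (avg n) - avg n) atTop (𝓝 0) := by
    simp only [avg, f.apply_smul_sum_range_iterate_sub]
    exact ((hKc.isVonNBounded (𝕜 := ℝ)).sub (hKc.isVonNBounded (𝕜 := ℝ))).smul_tendsto_zero
      (.of_forall fun n => sub_mem_sub (hiter (n + 1)) hx₀) tendsto_one_div_add_atTop_nhds_zero_nat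
  obtain ⟨x, hxK, hx⟩ := hKc.exists_mapClusterPt (f := atTop) (u := avg)
    (tendsto_principal.mpr (.of_forall (hKv.smul_sum_range_mem hiter)))
  refine ⟨x, hxK, sub_eq_zero.mp (eq_of_nhds_neBot ?_)⟩
  have hcluster := (hf.sub continuous_id).continuousAt.mapClusterPt hx
  exact hcluster.neBot.mono (inf_le_inf_left _ hdefect)

end FixedPoint

section Density

variable {d : ℕ}

theorem IsDensity.apply_self_le_one {ρ : Matrix (Fin d) (Fin d) ℂ} (hρ : IsDensity d ρ)
    (i : Fin d) : ρ i i ≤ 1 :=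
  hρ.2 ▸ Finset.single_le_sum (f := fun k => ρ k k) (fun _ _ => hρ.1.diag_nonneg)
    (Finset.mem_univ i)

theorem IsDensity.norm_apply_le_one {ρ : Matrix (Fin d) (Fin d) ℂ} (hρ : IsDensity d ρ)
    (i j : Fin d) : ‖ρ i j‖ ≤ 1 := by
  have hminor := (hρ.1.submatrix ![i, j]).det_nonneg
  simp only [det_fin_two, submatrix_apply, Matrix.cons_val_zero, Matrix.cons_val_one,
    sub_nonneg] at hminor
  rw [← hρ.1.isHermitian.apply j i, Complex.star_def, Complex.mul_conj'] at hminor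
  have hsq : (‖ρ i j‖ : ℂ) ^ 2 ≤ 1 :=
    hminor.trans (mul_le_one₀ (hρ.apply_self_le_one i) hρ.1.diag_nonneg
      (hρ.apply_self_le_one j))
  norm_cast at hsq
  exact (sq_le_one_iff₀ (norm_nonneg _)).mp hsq

theorem isClosed_setOf_isDensity : IsClosed {ρ : Matrix (Fin d) (Fin d) ℂ | IsDensity d ρ} := by
  have hD : {ρ : Matrix (Fin d) (Fin d) ℂ | IsDensity d ρ}
      = ({ρ | ρᴴ = ρ} ∩ ⋂ x : Fin d → ℂ, {ρ | 0 ≤ star x ⬝ᵥ ρ *ᵥ x}) ∩ {ρ | ρ.trace = 1} := by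
    ext ρ
    simp [IsDensity, posSemidef_iff_dotProduct_mulVec, IsHermitian, and_assoc]
  rw [hD]
  exact ((isClosed_eq (by fun_prop) continuous_id).inter
    (isClosed_iInter fun x => isClosed_le continuous_const (by fun_prop))).inter
    (isClosed_eq (by fun_prop) continuous_const)

theorem isCompact_setOf_isDensity : IsCompact {ρ : Matrix (Fin d) (Fin d) ℂ | IsDensity d ρ} :=
  (isCompact_univ_pi fun _ => isCompact_univ_pi fun _ => isCompact_closedBall (0 : ℂ) 1)
    |>.of_isClosed_subset isClosed_setOf_isDensity fun ρ hρ i _ j _ => by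
      simpa using hρ.norm_apply_le_one i j

theorem convex_setOf_isDensity : Convex ℝ {ρ : Matrix (Fin d) (Fin d) ℂ | IsDensity d ρ} := by
  intro ρ hρ σ hσ a b ha hb hab
  refine ⟨(hρ.1.smul ha).add (hσ.1.smul hb), ?_⟩
  rw [trace_add, trace_smul, trace_smul, hρ.2, hσ.2]
  simp [← Complex.coe_smul, ← Complex.ofReal_add, hab]

end Density

section Channel

variable {d : ℕ} {Λ Φ : Matrix (Fin d) (Fin d) ℂ → Matrix (Fin d) (Fin d) ℂ}

theorem isChannel_id : IsChannel d id :=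
  ⟨1, fun _ => 1, fun ρ => by simp, by simp⟩

theorem IsChannel.comp (hΛ : IsChannel d Λ) (hΦ : IsChannel d Φ) : IsChannel d (Λ ∘ Φ) := by
  obtain ⟨m, K, hK, hK1⟩ := hΛ
  obtain ⟨p, L, hL, hL1⟩ := hΦ
  refine ⟨m * p, fun k => K (finProdFinEquiv.symm k).1 * L (finProdFinEquiv.symm k).2, ?_, ?_⟩
  · intro ρ
    simp only [Function.comp_apply, hK, hL, Finset.mul_sum, Finset.sum_mul,
      ← finProdFinEquiv.sum_comp, Equiv.symm_apply_apply, Fintype.sum_prod_type,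
      conjTranspose_mul, Matrix.mul_assoc]
  · simp only [← finProdFinEquiv.sum_comp, Equiv.symm_apply_apply, Fintype.sum_prod_type_right,
      conjTranspose_mul, Matrix.mul_assoc]
    calc _ = ∑ j, (L j)ᴴ * (∑ i, (K i)ᴴ * K i) * L j := by
          simp only [Finset.mul_sum, Finset.sum_mul, Matrix.mul_assoc]
      _ = 1 := by simpa [hK1] using hL1

theorem IsChannel.isLinearMap (hΛ : IsChannel d Λ) : IsLinearMap ℝ Λ := by
  obtain ⟨m, K, hK, -⟩ := hΛ
  constructor <;> intros <;>
    simp only [hK, Matrix.mul_add, Matrix.add_mul, Finset.sum_add_distrib, Matrix.mul_smul,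
      Matrix.smul_mul, Finset.smul_sum]

theorem IsChannel.continuous (hΛ : IsChannel d Λ) : Continuous Λ := by
  obtain ⟨m, K, hK, -⟩ := hΛ
  rw [funext hK]
  fun_prop

theorem IsChannel.mapsTo_isDensity (hΛ : IsChannel d Λ) :
    MapsTo Λ {ρ | IsDensity d ρ} {ρ | IsDensity d ρ} := by
  obtain ⟨m, K, hK, hK1⟩ := hΛ
  intro ρ hρ
  refine ⟨hK ρ ▸ posSemidef_sum _ fun i _ => hρ.1.mul_mul_conjTranspose_same (K i), ?_⟩
  rw [hK, trace_sum]
  simp_rw [trace_mul_cycle (K _)]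
  rw [← trace_sum, ← Finset.sum_mul, hK1, one_mul, hρ.2]

theorem IsCMIO.comp {C : Matrix (Fin d) (Fin d) ℂ → ℝ} (hΛ : IsCMIO d C Λ) (hΦ : IsCMIO d C Φ)
    (hΦch : IsChannel d Φ) : IsCMIO d C (Λ ∘ Φ) :=
  fun ρ hρ => (hΛ _ (hΦch.mapsTo_isDensity hρ)).trans (hΦ ρ hρ)

theorem IsChannel.exists_isDensity_apply_eq_self (hΛ : IsChannel d Λ)
    (hne : {ρ : Matrix (Fin d) (Fin d) ℂ | IsDensity d ρ}.Nonempty) :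
    ∃ ρ, IsDensity d ρ ∧ Λ ρ = ρ :=
  (hΛ.isLinearMap.mk' Λ).exists_mem_apply_eq_self_of_mapsTo isCompact_setOf_isDensity
    convex_setOf_isDensity hne hΛ.continuous hΛ.mapsTo_isDensity

end Channel

section Power

variable {d : ℕ} {C : Matrix (Fin d) (Fin d) ℂ → ℝ}
  {Θ Λ Φ₁ Φ₂ : Matrix (Fin d) (Fin d) ℂ → Matrix (Fin d) (Fin d) ℂ}

theorem BoundedOnD.bddAbove_image_sub (hb : BoundedOnD d C) (hΘ : IsChannel d Θ)
    (hΛ : IsChannel d Λ) : BddAbove ((fun ρ => C (Θ ρ) - C (Λ ρ)) '' {ρ | IsDensity d ρ}) := by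
  obtain ⟨M, hM⟩ := hb
  refine ⟨2 * M, ?_⟩
  rintro _ ⟨ρ, hρ, rfl⟩
  have hΘρ := abs_le.mp (hM _ (hΘ.mapsTo_isDensity hρ))
  have hΛρ := abs_le.mp (hM _ (hΛ.mapsTo_isDensity hρ))
  dsimp only
  linarith

theorem sub_le_power (hb : BoundedOnD d C) (hΘ : IsChannel d Θ) (hΛ : IsChannel d Λ)
    {ρ : Matrix (Fin d) (Fin d) ℂ} (hρ : IsDensity d ρ) : C (Θ ρ) - C (Λ ρ) ≤ power d C Θ Λ :=
  le_csSup (hb.bddAbove_image_sub hΘ hΛ) ⟨ρ, hρ, rfl⟩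

theorem power_nonneg (hb : BoundedOnD d C) (hΘ : IsChannel d Θ) (hΛ : IsChannel d Λ)
    (hΛc : IsCMIO d C Λ) : 0 ≤ power d C Θ Λ := by
  rcases Set.eq_empty_or_nonempty {ρ : Matrix (Fin d) (Fin d) ℂ | IsDensity d ρ} with hD | hD
  · rw [power, hD, Set.image_empty, Real.sSup_empty]
  obtain ⟨ρ, hρ, hfix⟩ := hΘ.exists_isDensity_apply_eq_self hD
  calc 0 ≤ C (Θ ρ) - C (Λ ρ) := by rw [hfix]; linarith [hΛc ρ hρ]
    _ ≤ power d C Θ Λ := sub_le_power hb hΘ hΛ hρ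

theorem power_comp_le (hb : BoundedOnD d C) (hΘ : IsChannel d Θ) (hΛ : IsChannel d Λ)
    (hΛc : IsCMIO d C Λ) (hΦ₁ : IsCMIO d C Φ₁) (hΦ₂ : IsChannel d Φ₂) :
    power d C (Φ₁ ∘ Θ ∘ Φ₂) (Λ ∘ Φ₂) ≤ power d C Θ Λ := by
  refine Real.sSup_le ?_ (power_nonneg hb hΘ hΛ hΛc)
  rintro _ ⟨ρ, hρ, rfl⟩
  have hΦ₂ρ := hΦ₂.mapsTo_isDensity hρ
  calc C (Φ₁ (Θ (Φ₂ ρ))) - C (Λ (Φ₂ ρ)) ≤ C (Θ (Φ₂ ρ)) - C (Λ (Φ₂ ρ)) :=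
        sub_le_sub_right (hΦ₁ _ (hΘ.mapsTo_isDensity hΦ₂ρ)) _
    _ ≤ power d C Θ Λ := sub_le_power hb hΘ hΛ hΦ₂ρ

theorem dynCoh_le_abs_power (hΛ : IsChannel d Λ) (hΛc : IsCMIO d C Λ) :
    dynCoh d C Θ ≤ |power d C Θ Λ| :=
  csInf_le ⟨0, by rintro _ ⟨_, _, rfl⟩; exact abs_nonneg _⟩ ⟨Λ, ⟨hΛ, hΛc⟩, rfl⟩

end Power

theorem stmt8 (d : ℕ) (C : Matrix (Fin d) (Fin d) ℂ → ℝ) (hb : BoundedOnD d C)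
    (Φ₁ Φ₂ Θ : Matrix (Fin d) (Fin d) ℂ → Matrix (Fin d) (Fin d) ℂ)
    (hΦ₁ : IsChannel d Φ₁) (hΦ₂ : IsChannel d Φ₂)
    (hc₁ : IsCMIO d C Φ₁) (hc₂ : IsCMIO d C Φ₂) (hΘ : IsChannel d Θ) :
    dynCoh d C (Φ₁ ∘ Θ ∘ Φ₂) ≤ dynCoh d C Θ := by
  refine le_csInf ⟨_, id, ⟨isChannel_id, fun _ _ => le_rfl⟩, rfl⟩ ?_
  rintro _ ⟨Λ, ⟨hΛ, hΛc⟩, rfl⟩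
  have hΛΦ₂ : IsChannel d (Λ ∘ Φ₂) := hΛ.comp hΦ₂
  have hΛΦ₂c : IsCMIO d C (Λ ∘ Φ₂) := hΛc.comp hc₂ hΦ₂
  calc dynCoh d C (Φ₁ ∘ Θ ∘ Φ₂) ≤ |power d C (Φ₁ ∘ Θ ∘ Φ₂) (Λ ∘ Φ₂)| :=
        dynCoh_le_abs_power hΛΦ₂ hΛΦ₂c
    _ = power d C (Φ₁ ∘ Θ ∘ Φ₂) (Λ ∘ Φ₂) :=
        abs_of_nonneg (power_nonneg hb (hΦ₁.comp (hΘ.comp hΦ₂)) hΛΦ₂ hΛΦ₂c)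
    _ ≤ power d C Θ Λ := power_comp_le hb hΘ hΛ hΛc hc₁ hΦ₂
    _ ≤ |power d C Θ Λ| := le_abs_self _
end

section
/- Let U be a 2×2 unitary matrix, let ψ, ψ' be orthonormal vectors in ℂ², let λ ∈ [0,1], and set ρ = λ|ψ⟩⟨ψ| + (1−λ)|ψ'⟩⟨ψ'|. Then C_{E,r}(UρU†) − C_{E,r}(ρ) = H[{p_k(UρU†)}] − H[{p_k(ρ)}] ≤ 1/2 − h(λ)/2 ≤ 1/2. In particular, no unitary channel can increase the POVM-based coherence by more than 1/2 on any qubit state. -/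
/-!
A Hermitian trace-one `ρ` with `ρ 0 1 = (X - iY)/2` has POVM outcome probabilities
`(1 ± X)/4` and `(1 ± Y)/4`, so `H(ρ) = 1 + (h((1+X)/2) + h((1+Y)/2))/2 ≤ 2`.
If `ρ` has eigenvalues `λ, 1-λ`, then `X² + Y² ≤ 1 - 4 det ρ = (2λ-1)²`. The function
`g(t) = h((1+√t)/2)` is decreasing and concave on `[0,1]`, with `g(0) = 1` bit, so
`g(X²) + g(Y²) ≥ g(0) + g(X² + Y²) ≥ 1 + h(λ)`, i.e. `H(ρ) ≥ 3/2 + h(λ)/2`. Concavity of `g`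
amounts to monotonicity of `artanh u / u`, which is visible on its power series.
The upper bound applied to `UρU†` and the lower bound applied to `ρ` give the claim.
-/

open Matrix ComplexOrder

/-- The POVM vectors `|φ_k⟩ = (|0⟩ + i^k |1⟩)/√2` for `k = 0,1,2,3`. -/
noncomputable def phiv (k : Fin 4) : Fin 2 → ℂ :=
  ![(1 : ℂ) / Real.sqrt 2, Complex.I ^ (k : ℕ) / Real.sqrt 2]

/-- The outer product `|ψ⟩⟨ψ|`. -/
def outer (ψ : Fin 2 → ℂ) : Matrix (Fin 2) (Fin 2) ℂ :=
  vecMulVec ψ (star ψ)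

/-- The POVM outcome probabilities `p_k(ρ) = (1/2)⟨φ_k|ρ|φ_k⟩`. -/
noncomputable def pk (ρ : Matrix (Fin 2) (Fin 2) ℂ) (k : Fin 4) : ℝ :=
  (star (phiv k) ⬝ᵥ ρ.mulVec (phiv k)).re / 2

/-- `-x log₂ x`, with the convention `0 log₂ 0 = 0`. -/
noncomputable def ent2 (x : ℝ) : ℝ := -(x * Real.logb 2 x)

/-- The Shannon entropy (base 2) of the POVM outcome distribution of `ρ`. -/
noncomputable def H4 (ρ : Matrix (Fin 2) (Fin 2) ℂ) : ℝ := ∑ k : Fin 4, ent2 (pk ρ k)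

/-- The binary entropy `h(λ)` (base 2). -/
noncomputable def binEnt (l : ℝ) : ℝ := ent2 l + ent2 (1 - l)

/-- A qubit density matrix: positive semidefinite with trace 1. -/
def IsDensity2 (ρ : Matrix (Fin 2) (Fin 2) ℂ) : Prop :=
  ρ.PosSemidef ∧ ρ.trace = 1

open Real Set

lemma monotoneOn_log_one_add_sub_log_one_sub_div :
    MonotoneOn (fun u : ℝ => (log (1 + u) - log (1 - u)) / u) (Ioo 0 1) := by
  have series : ∀ x ∈ Ioo (0 : ℝ) 1,
      HasSum (fun k : ℕ => 2 * (1 / (2 * k + 1)) * x ^ (2 * k))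
        ((log (1 + x) - log (1 - x)) / x) := by
    rintro x ⟨hx0, hx1⟩
    refine ((hasSum_log_sub_log_of_abs_lt_one (abs_lt.2 ⟨by linarith, hx1⟩)).div_const x).congr_fun
      fun k => ?_
    rw [pow_succ, ← mul_assoc, mul_div_cancel_right₀ _ hx0.ne']
  intro u hu v hv huv
  refine hasSum_le (fun k => ?_) (series u hu) (series v hv)
  have hu0 : 0 ≤ u := hu.1.le
  gcongr

lemma ConcaveOn.map_zero_add_map_add_le {f : ℝ → ℝ} {S : Set ℝ} (hf : ConcaveOn ℝ S f)
    (h0 : 0 ∈ S) {a b : ℝ} (hab : a + b ∈ S) (ha : 0 ≤ a) (hb : 0 ≤ b) :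
    f 0 + f (a + b) ≤ f a + f b := by
  rcases (add_nonneg ha hb).eq_or_lt with h | h
  · obtain ⟨rfl, rfl⟩ : a = 0 ∧ b = 0 := ⟨by linarith, by linarith⟩
    simp
  · have hchord : ∀ x y : ℝ, 0 ≤ x → 0 ≤ y → x + y = a + b →
        y / (a + b) * f 0 + x / (a + b) * f (a + b) ≤ f x := by
      intro x y hx hy hxy
      have hw : y / (a + b) + x / (a + b) = 1 := by rw [← add_div, add_comm, hxy, div_self h.ne']
      have := hf.2 h0 hab (by positivity) (by positivity) hw
      simp only [smul_eq_mul, mul_zero, zero_add, div_mul_cancel₀ _ h.ne'] at this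
      exact this
    have hsum : b / (a + b) * f 0 + a / (a + b) * f (a + b) +
        (a / (a + b) * f 0 + b / (a + b) * f (a + b)) = f 0 + f (a + b) := by
      field_simp
      ring
    linarith [hchord a b ha hb rfl, hchord b a hb ha (add_comm b a)]

/-- Binary entropy (in nats) of a qubit state whose Bloch vector has squared length `t`. -/
noncomputable def binEntropySqrt (t : ℝ) : ℝ := binEntropy ((1 + √t) / 2)

lemma binEntropySqrt_zero : binEntropySqrt 0 = log 2 := by
  rw [binEntropySqrt, sqrt_zero, show (1 + 0 : ℝ) / 2 = 2⁻¹ by norm_num, binEntropy_two_inv]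

lemma continuous_binEntropySqrt : Continuous binEntropySqrt :=
  binEntropy_continuous.comp (by fun_prop)

lemma sqrt_mem_Ioo_of_mem_Ioo {t : ℝ} (ht : t ∈ Ioo (0 : ℝ) 1) : √t ∈ Ioo (0 : ℝ) 1 :=
  ⟨sqrt_pos.2 ht.1, (sqrt_lt' one_pos).2 (by simpa using ht.2)⟩

lemma hasDerivAt_binEntropySqrt {t : ℝ} (ht : t ∈ Ioo (0 : ℝ) 1) :
    HasDerivAt binEntropySqrt (-((log (1 + √t) - log (1 - √t)) / √t) / 4) t := by
  obtain ⟨hu0, hu1⟩ := sqrt_mem_Ioo_of_mem_Ioo ht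
  have hp0 : (1 + √t) / 2 ≠ 0 := by positivity
  have hp1 : (1 + √t) / 2 ≠ 1 := by intro h; linarith
  have hinner : HasDerivAt (fun t : ℝ => (1 + √t) / 2) (1 / (2 * √t) / 2) t :=
    ((hasDerivAt_sqrt ht.1.ne').const_add 1).div_const 2
  refine ((hasDerivAt_binEntropy hp0 hp1).comp t hinner).congr_deriv ?_
  rw [show 1 - (1 + √t) / 2 = (1 - √t) / 2 by ring, log_div (by linarith) two_ne_zero,
    log_div (by linarith) two_ne_zero]
  field_simp
  ring

lemma concaveOn_binEntropySqrt : ConcaveOn ℝ (Icc 0 1) binEntropySqrt := by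
  refine AntitoneOn.concaveOn_of_deriv (convex_Icc 0 1) continuous_binEntropySqrt.continuousOn
    (fun x hx => ?_) fun x hx y hy hxy => ?_
  · rw [interior_Icc] at hx
    exact (hasDerivAt_binEntropySqrt hx).differentiableAt.differentiableWithinAt
  · rw [interior_Icc] at hx hy
    rw [(hasDerivAt_binEntropySqrt hx).deriv, (hasDerivAt_binEntropySqrt hy).deriv]
    have := monotoneOn_log_one_add_sub_log_one_sub_div (sqrt_mem_Ioo_of_mem_Ioo hx)
      (sqrt_mem_Ioo_of_mem_Ioo hy) (sqrt_le_sqrt hxy)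
    linarith

lemma antitoneOn_binEntropySqrt : AntitoneOn binEntropySqrt (Icc 0 1) := by
  intro x hx y hy hxy
  have mem : ∀ t ∈ Icc (0 : ℝ) 1, (1 + √t) / 2 ∈ Icc 2⁻¹ 1 := fun t ht =>
    ⟨by linarith [sqrt_nonneg t], by linarith [sqrt_le_one.2 ht.2]⟩
  exact binEntropy_strictAntiOn.antitoneOn (mem x hx) (mem y hy) (by gcongr)

lemma binEnt_eq_binEntropy_div (p : ℝ) : binEnt p = binEntropy p / log 2 := by
  simp only [binEnt, ent2, binEntropy, logb, log_inv]
  ring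

lemma binEnt_nonneg {p : ℝ} (h0 : 0 ≤ p) (h1 : p ≤ 1) : 0 ≤ binEnt p := by
  rw [binEnt_eq_binEntropy_div]
  exact div_nonneg (binEntropy_nonneg h0 h1) (log_pos one_lt_two).le

lemma binEnt_le_one (p : ℝ) : binEnt p ≤ 1 := by
  rw [binEnt_eq_binEntropy_div, div_le_one (log_pos one_lt_two)]
  exact binEntropy_le_log_two

lemma binEnt_one_add_div_two (x : ℝ) : binEnt ((1 + x) / 2) = binEntropySqrt (x ^ 2) / log 2 := by
  rw [binEnt_eq_binEntropy_div, binEntropySqrt, sqrt_sq_eq_abs]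
  rcases abs_choice x with h | h <;> rw [h]
  rw [show (1 + -x) / 2 = 1 - (1 + x) / 2 by ring, binEntropy_one_sub]

lemma one_add_binEnt_le_binEnt_add_binEnt {x y w : ℝ} (hxy : x ^ 2 + y ^ 2 ≤ w ^ 2)
    (hw : w ^ 2 ≤ 1) :
    1 + binEnt ((1 + w) / 2) ≤ binEnt ((1 + x) / 2) + binEnt ((1 + y) / 2) := by
  have hsum : x ^ 2 + y ^ 2 ∈ Icc (0 : ℝ) 1 := ⟨by positivity, hxy.trans hw⟩
  have hsuper := concaveOn_binEntropySqrt.map_zero_add_map_add_le ⟨le_rfl, zero_le_one⟩ hsum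
    (sq_nonneg x) (sq_nonneg y)
  have hanti := antitoneOn_binEntropySqrt hsum ⟨sq_nonneg w, hw⟩ hxy
  rw [binEntropySqrt_zero] at hsuper
  rw [binEnt_one_add_div_two, binEnt_one_add_div_two, binEnt_one_add_div_two,
    ← div_self (log_pos one_lt_two).ne', ← add_div, ← add_div]
  exact div_le_div_of_nonneg_right (by linarith) (log_pos one_lt_two).le

open Complex ComplexConjugate in
lemma pk_eq_of_isHermitian {ρ : Matrix (Fin 2) (Fin 2) ℂ} (hρ : ρ.IsHermitian) (k : Fin 4) :
    pk ρ k = ((ρ.trace).re + 2 * (I ^ (k : ℕ) * ρ 0 1).re) / 4 := by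
  set c := I ^ (k : ℕ)
  have hunit : conj c * c = 1 := by
    rw [← normSq_eq_conj_mul_self, map_pow, normSq_I, one_pow, ofReal_one]
  have hs : ((√2 : ℝ) : ℂ) ^ 2 = 2 := by norm_cast; simp
  have hamp : star (phiv k) ⬝ᵥ ρ *ᵥ phiv k = (ρ.trace + (c * ρ 0 1 + conj (c * ρ 0 1))) / 2 := by
    simp only [phiv, dotProduct, mulVec, Fin.sum_univ_two, Matrix.trace_fin_two, Pi.star_apply,
      Matrix.cons_val_zero, Matrix.cons_val_one, ← hρ.apply 1 0, RCLike.star_def, map_div₀,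
      map_one, conj_ofReal, map_mul]
    field_simp
    linear_combination
      (ρ 1 1 * 2) * hunit - (ρ 0 0 + ρ 1 1 + c * ρ 0 1 + conj c * conj (ρ 0 1)) * hs
  rw [pk, hamp]
  simp only [div_ofNat_re, add_re, conj_re]
  ring

lemma ent2_half (y : ℝ) : ent2 (y / 2) = y / 2 + ent2 y / 2 := by
  rcases eq_or_ne y 0 with rfl | hy
  · simp [ent2]
  · rw [ent2, ent2, logb_div hy two_ne_zero, logb_self_eq_one one_lt_two]
    ring

lemma ent2_add_ent2 (x : ℝ) :
    ent2 ((1 + x) / 4) + ent2 ((1 - x) / 4) = 1 / 2 + binEnt ((1 + x) / 2) / 2 := by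
  rw [binEnt, show 1 - (1 + x) / 2 = (1 - x) / 2 by ring,
    show (1 + x) / 4 = (1 + x) / 2 / 2 by ring, show (1 - x) / 4 = (1 - x) / 2 / 2 by ring, ent2_half ((1 + x) / 2),
    ent2_half ((1 - x) / 2)]
  ring

open Complex in
lemma H4_eq_of_isHermitian {ρ : Matrix (Fin 2) (Fin 2) ℂ} (hρ : ρ.IsHermitian) (htr : ρ.trace = 1) :
    H4 ρ = 1 + (binEnt ((1 + 2 * (ρ 0 1).re) / 2) + binEnt ((1 + 2 * (ρ 0 1).im) / 2)) / 2 := by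
  have hp : ∀ (k : Fin 4) (c : ℂ), I ^ (k : ℕ) = c → pk ρ k = (1 + 2 * (c * ρ 0 1).re) / 4 :=
    fun k c hc => by rw [pk_eq_of_isHermitian hρ, htr, one_re, hc]
  rw [H4, Fin.sum_univ_four, hp 0 1 (pow_zero I), hp 1 I (pow_one I), hp 2 (-1) I_sq,
    hp 3 (-I) I_pow_three]
  simp only [one_mul, neg_mul, neg_re, mul_re, I_re, I_im, zero_mul, zero_sub, mul_neg, neg_neg,
    ← sub_eq_add_neg]
  linarith [ent2_add_ent2 (2 * (ρ 0 1).re), ent2_add_ent2 (2 * (ρ 0 1).im)]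

open Complex ComplexConjugate in
lemma four_normSq_apply_zero_one_le {ρ : Matrix (Fin 2) (Fin 2) ℂ} (hρ : ρ.IsHermitian)
    (htr : ρ.trace = 1) :
    4 * normSq (ρ 0 1) ≤ 1 - 4 * ρ.det.re := by
  have hdiag : ∀ i, (ρ i i).im = 0 := fun i => conj_eq_iff_im.1 (hρ.apply i i)
  have htr' : (ρ 0 0).re + (ρ 1 1).re = 1 := by
    simpa [Matrix.trace_fin_two] using congrArg re htr
  have hdet : ρ.det.re = (ρ 0 0).re * (ρ 1 1).re - normSq (ρ 0 1) := by
    rw [Matrix.det_fin_two, ← hρ.apply 1 0, RCLike.star_def, sub_re, mul_re, hdiag, hdiag,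
      mul_conj, ofReal_re]
    ring
  nlinarith [sq_nonneg ((ρ 0 0).re - (ρ 1 1).re)]

lemma H4_le_two {ρ : Matrix (Fin 2) (Fin 2) ℂ} (hρ : ρ.IsHermitian) (htr : ρ.trace = 1) :
    H4 ρ ≤ 2 := by
  rw [H4_eq_of_isHermitian hρ htr]
  linarith [binEnt_le_one ((1 + 2 * (ρ 0 1).re) / 2), binEnt_le_one ((1 + 2 * (ρ 0 1).im) / 2)]

lemma three_halves_add_binEnt_le_H4 {ρ : Matrix (Fin 2) (Fin 2) ℂ} (hρ : ρ.IsHermitian)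
    (htr : ρ.trace = 1) {l : ℝ} (hl : l ∈ Icc (0 : ℝ) 1) (hdet : ρ.det = l * (1 - l)) :
    3 / 2 + binEnt l / 2 ≤ H4 ρ := by
  have hoff := four_normSq_apply_zero_one_le hρ htr
  rw [hdet, Complex.normSq_apply] at hoff
  have hbound : (2 * (ρ 0 1).re) ^ 2 + (2 * (ρ 0 1).im) ^ 2 ≤ (2 * l - 1) ^ 2 := by
    norm_cast at hoff
    nlinarith
  have key := one_add_binEnt_le_binEnt_add_binEnt hbound (by nlinarith [hl.1, hl.2])
  rw [show (1 + (2 * l - 1)) / 2 = l by ring] at key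
  rw [H4_eq_of_isHermitian hρ htr]
  linarith

lemma isHermitian_smul_outer_add_smul_outer (a b : ℝ) (ψ ψ' : Fin 2 → ℂ) :
    (a • outer ψ + b • outer ψ').IsHermitian :=
  ((posSemidef_vecMulVec_self_star ψ).isHermitian.smul (IsSelfAdjoint.all a)).add
    ((posSemidef_vecMulVec_self_star ψ').isHermitian.smul (IsSelfAdjoint.all b))

lemma trace_smul_outer_add_smul_outer (a b : ℝ) {ψ ψ' : Fin 2 → ℂ} (hψ : star ψ ⬝ᵥ ψ = 1)
    (hψ' : star ψ' ⬝ᵥ ψ' = 1) : (a • outer ψ + b • outer ψ').trace = a + b := by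
  simp only [trace_add, trace_smul, outer, trace_vecMulVec, dotProduct_comm _ (star _), hψ, hψ',
    Complex.real_smul, mul_one]

open ComplexConjugate in
lemma det_smul_outer_add_smul_outer (a b : ℝ) {ψ ψ' : Fin 2 → ℂ} (hψ : star ψ ⬝ᵥ ψ = 1)
    (hψ' : star ψ' ⬝ᵥ ψ' = 1) (horth : star ψ ⬝ᵥ ψ' = 0) :
    (a • outer ψ + b • outer ψ').det = a * b := by
  simp only [dotProduct, Fin.sum_univ_two, Pi.star_apply, RCLike.star_def] at hψ hψ' horth
  simp only [det_fin_two, Matrix.add_apply, Matrix.smul_apply, outer, vecMulVec_apply,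
    Pi.star_apply, RCLike.star_def, Complex.real_smul]
  have horth' := congrArg conj horth
  simp only [map_add, map_mul, Complex.conj_conj, map_zero] at horth'
  linear_combination (a * b : ℂ) * ((conj (ψ' 0) * ψ' 0 + conj (ψ' 1) * ψ' 1) * hψ + hψ'
    - (conj (ψ 0) * ψ' 0 + conj (ψ 1) * ψ' 1) * horth')

lemma trace_unitary_conj {n R : Type*} [Fintype n] [DecidableEq n] [CommRing R] [StarRing R]
    {U : Matrix n n R} (hU : U ∈ unitaryGroup n R) (ρ : Matrix n n R) :
    (U * ρ * Uᴴ).trace = ρ.trace := by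
  rw [trace_mul_comm, ← Matrix.mul_assoc, ← star_eq_conjTranspose, hU.1, Matrix.one_mul]

theorem stmt15 (U : Matrix (Fin 2) (Fin 2) ℂ) (hU : U ∈ Matrix.unitaryGroup (Fin 2) ℂ)
    (ψ ψ' : Fin 2 → ℂ) (hψ : star ψ ⬝ᵥ ψ = 1) (hψ' : star ψ' ⬝ᵥ ψ' = 1)
    (horth : star ψ ⬝ᵥ ψ' = 0) (l : ℝ) (hl : l ∈ Set.Icc (0 : ℝ) 1)
    (ρ : Matrix (Fin 2) (Fin 2) ℂ) (hρ : ρ = l • outer ψ + (1 - l) • outer ψ') :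
    (H4 (U * ρ * Uᴴ) - binEnt l) - (H4 ρ - binEnt l) = H4 (U * ρ * Uᴴ) - H4 ρ ∧
      H4 (U * ρ * Uᴴ) - H4 ρ ≤ 1 / 2 - binEnt l / 2 ∧
      1 / 2 - binEnt l / 2 ≤ 1 / 2 := by
  have hherm : ρ.IsHermitian := hρ ▸ isHermitian_smul_outer_add_smul_outer l (1 - l) ψ ψ'
  have htr : ρ.trace = 1 := by
    rw [hρ, trace_smul_outer_add_smul_outer _ _ hψ hψ', Complex.ofReal_sub, Complex.ofReal_one,
      add_sub_cancel]
  have hdet : ρ.det = l * (1 - l) := by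
    rw [hρ, det_smul_outer_add_smul_outer _ _ hψ hψ' horth, Complex.ofReal_sub, Complex.ofReal_one]
  have hlower := three_halves_add_binEnt_le_H4 hherm htr hl hdet
  have hupper := H4_le_two (isHermitian_mul_mul_conjTranspose U hherm)
    (by rw [trace_unitary_conj hU, htr])
  exact ⟨by ring, by linarith, by linarith [binEnt_nonneg hl.1 hl.2]⟩
end
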